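/- arXiv:2605.29865 — 4 statements merged into one kernel-verified Lean document; each statement's English description precedes it below -/
import Mathlib

section
/- If a Leibniz algebra g is hypercentral and quasi-Artinian, then g is solvable. -/
universe u v

/-- A (left) Leibniz algebra over a field `K`: a `K`-vector space with a bilinear
bracket satisfying the left Leibniz identity. -/
class LeibnizAlgebra (K : Type u) (g : Type v) [Field K] [AddCommGroup g] [Module K g]
    extends Bracket g g where
  add_bracket : ∀ x y z : g, ⁅x + y, z⁆ = ⁅x, z⁆ + ⁅y, z⁆
  bracket_add : ∀ x y z : g, ⁅x, y + z⁆ = ⁅x, y⁆ + ⁅x, z⁆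
  smul_bracket : ∀ (c : K) (x y : g), ⁅c • x, y⁆ = c • ⁅x, y⁆
  bracket_smul : ∀ (c : K) (x y : g), ⁅x, c • y⁆ = c • ⁅x, y⁆
  leibniz : ∀ x y z : g, ⁅x, ⁅y, z⁆⁆ = ⁅⁅x, y⁆, z⁆ + ⁅y, ⁅x, z⁆⁆

namespace Leibniz

section Defs

variable (K : Type u) (g : Type v) [Field K] [AddCommGroup g] [Module K g] [LeibnizAlgebra K g]

lemma zero_bracket (y : g) : ⁅(0 : g), y⁆ = 0 := by
  have h := LeibnizAlgebra.smul_bracket (0 : K) (0 : g) y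
  simpa using h

lemma bracket_zero (y : g) : ⁅y, (0 : g)⁆ = 0 := by
  have h := LeibnizAlgebra.bracket_smul (0 : K) y (0 : g)
  simpa using h

lemma neg_bracket (x y : g) : ⁅-x, y⁆ = -⁅x, y⁆ := by
  have h := LeibnizAlgebra.smul_bracket (-1 : K) x y
  simpa using h

lemma bracket_neg (x y : g) : ⁅x, -y⁆ = -⁅x, y⁆ := by
  have h := LeibnizAlgebra.bracket_smul (-1 : K) x y
  simpa using h

lemma sub_bracket (x x' y : g) : ⁅x - x', y⁆ = ⁅x, y⁆ - ⁅x', y⁆ := by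
  rw [sub_eq_add_neg, LeibnizAlgebra.add_bracket, neg_bracket K, ← sub_eq_add_neg]

lemma bracket_sub (x y y' : g) : ⁅x, y - y'⁆ = ⁅x, y⁆ - ⁅x, y'⁆ := by
  rw [sub_eq_add_neg, LeibnizAlgebra.bracket_add, bracket_neg K, ← sub_eq_add_neg]

/-- A (two-sided) ideal of a Leibniz algebra: a subspace `I` with `⁅g,I⁆ ⊆ I` and
`⁅I,g⁆ ⊆ I`. -/
def IsIdeal (I : Submodule K g) : Prop :=
  ∀ x : g, ∀ a ∈ I, ⁅x, a⁆ ∈ I ∧ ⁅a, x⁆ ∈ I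

/-- The bracket `[A, B]` of two subspaces: the span of all brackets `⁅a, b⁆`. -/
def bk (A B : Submodule K g) : Submodule K g :=
  Submodule.span K {z : g | ∃ a ∈ A, ∃ b ∈ B, z = ⁅a, b⁆}

/-- The derived series of a subspace `I`, computed in `g`:
`I^(0) = I`, `I^(n+1) = [I^(n), I^(n)]`. -/
def subDerived (I : Submodule K g) : ℕ → Submodule K g
  | 0 => I
  | n + 1 => bk K g (subDerived I n) (subDerived I n)

/-- The derived series of `g`: `g^(0) = g`, `g^(n+1) = [g^(n), g^(n)]`. -/
def derived : ℕ → Submodule K g := subDerived K g ⊤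

/-- A Leibniz algebra is solvable if `g^(n) = 0` for some `n`. -/
def IsSolvable : Prop := ∃ n : ℕ, derived K g n = ⊥

/-- A Leibniz algebra is abelian if its bracket is identically zero. -/
def IsAbelian : Prop := ∀ x y : g, ⁅x, y⁆ = 0

/-- A nonzero Leibniz algebra is simple if its only two-sided ideals are `⊥` and `⊤`. -/
def IsSimpleAlg : Prop :=
  (∃ x : g, x ≠ 0) ∧ ∀ I : Submodule K g, IsIdeal K g I → I = ⊥ ∨ I = ⊤

/-- A Leibniz algebra `g` is quasi-Artinian if for every descending chain of ideals
`I_1 ⊇ I_2 ⊇ ⋯` there is `m` with `[g^(m), I_m] ⊆ I_n` and `[I_m, g^(m)] ⊆ I_n` for all `n`. -/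
def QuasiArtinian : Prop :=
  ∀ I : ℕ → Submodule K g, (∀ n, IsIdeal K g (I n)) → (∀ n, I (n + 1) ≤ I n) →
    ∃ m : ℕ, ∀ n : ℕ,
      bk K g (derived K g m) (I m) ≤ I n ∧ bk K g (I m) (derived K g m) ≤ I n

/-- A Leibniz algebra is Artinian if every descending chain of two-sided ideals stabilizes. -/
def ArtinianAlg : Prop :=
  ∀ I : ℕ → Submodule K g, (∀ n, IsIdeal K g (I n)) → (∀ n, I (n + 1) ≤ I n) →
    ∃ m : ℕ, ∀ n : ℕ, m ≤ n → I n = I m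

/-- A solvable ideal: an ideal which is solvable (as a Leibniz algebra). -/
def IsSolvableIdeal (I : Submodule K g) : Prop :=
  IsIdeal K g I ∧ ∃ n : ℕ, subDerived K g I n = ⊥

/-- An abelian ideal: an ideal whose bracket vanishes identically. -/
def IsAbelianIdeal (I : Submodule K g) : Prop :=
  IsIdeal K g I ∧ ∀ x ∈ I, ∀ y ∈ I, ⁅x, y⁆ = (0 : g)

/-- Minimal condition on solvable ideals: every descending chain of solvable
two-sided ideals stabilizes. -/
def MinOnSolvableIdeals : Prop :=
  ∀ I : ℕ → Submodule K g, (∀ n, IsSolvableIdeal K g (I n)) → (∀ n, I (n + 1) ≤ I n) →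
    ∃ m : ℕ, ∀ n : ℕ, m ≤ n → I n = I m

/-- Minimal condition on abelian ideals: every descending chain of abelian
two-sided ideals stabilizes. -/
def MinOnAbelianIdeals : Prop :=
  ∀ I : ℕ → Submodule K g, (∀ n, IsAbelianIdeal K g (I n)) → (∀ n, I (n + 1) ≤ I n) →
    ∃ m : ℕ, ∀ n : ℕ, m ≤ n → I n = I m

/-- `I` is a two-sided ideal of the subalgebra `A` (both viewed as subspaces of `g`). -/
def IsIdealIn (A I : Submodule K g) : Prop :=
  I ≤ A ∧ ∀ x ∈ A, ∀ a ∈ I, ⁅x, a⁆ ∈ I ∧ ⁅a, x⁆ ∈ I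

/-- A prime ideal: a proper two-sided ideal `P` such that `[h₁, h₂] ⊆ P` for ideals
`h₁, h₂` forces `h₁ ⊆ P` or `h₂ ⊆ P`. -/
def IsPrimeIdeal (P : Submodule K g) : Prop :=
  IsIdeal K g P ∧ P ≠ ⊤ ∧
    ∀ h₁ h₂ : Submodule K g, IsIdeal K g h₁ → IsIdeal K g h₂ →
      bk K g h₁ h₂ ≤ P → h₁ ≤ P ∨ h₂ ≤ P

/-- `Leib(g)`: the subspace spanned by all squares `⁅x, x⁆`. -/
def leibIdeal : Submodule K g :=
  Submodule.span K {z : g | ∃ x : g, z = ⁅x, x⁆}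

/-- Given a subspace `C`, the preimage of the center of `g/C`:
all `x` with `⁅x, y⁆ ∈ C` and `⁅y, x⁆ ∈ C` for every `y`. -/
def centerStep (C : Submodule K g) : Submodule K g where
  carrier := {x : g | ∀ y : g, ⁅x, y⁆ ∈ C ∧ ⁅y, x⁆ ∈ C}
  add_mem' := by
    intro a b ha hb
    intro y
    constructor
    · rw [LeibnizAlgebra.add_bracket]; exact C.add_mem (ha y).1 (hb y).1
    · rw [LeibnizAlgebra.bracket_add]; exact C.add_mem (ha y).2 (hb y).2
  zero_mem' := by
    intro y
    constructor
    · rw [zero_bracket K]; exact C.zero_mem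
    · rw [bracket_zero K]; exact C.zero_mem
  smul_mem' := by
    intro c a ha y
    constructor
    · rw [LeibnizAlgebra.smul_bracket]; exact C.smul_mem c (ha y).1
    · rw [LeibnizAlgebra.bracket_smul]; exact C.smul_mem c (ha y).2

/-- The transfinite upper central series of `g`: `ζ_0 = 0`,
`ζ_{α+1}/ζ_α = Z(g/ζ_α)`, and `ζ_ρ = ⋃_{α<ρ} ζ_α` at limit ordinals. -/
noncomputable def zeta : Ordinal.{0} → Submodule K g := fun o =>
  Ordinal.limitRecOn o ⊥ (fun _ C => centerStep K g C)
    (fun o _ ih => ⨆ (a : Ordinal.{0}) (h : a < o), ih a h)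

/-- `g` is hypercentral if `ζ_α(g) = g` for some ordinal `α`. -/
def Hypercentral : Prop := ∃ o : Ordinal.{0}, zeta K g o = ⊤

end Defs

section Quotient

variable {K : Type u} {g : Type v} [Field K] [AddCommGroup g] [Module K g] [LeibnizAlgebra K g]

/-- The bracket induced on the quotient `g ⧸ I` by a two-sided ideal `I`. -/
def quotBracket (I : Submodule K g) (hI : IsIdeal K g I) : g ⧸ I → g ⧸ I → g ⧸ I :=
  Quotient.map₂ (fun x y : g => ⁅x, y⁆) (by
    intro x x' hx y y' hy
    have hx' : x - x' ∈ I := (Submodule.quotientRel_def I).1 hx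
    have hy' : y - y' ∈ I := (Submodule.quotientRel_def I).1 hy
    refine (Submodule.quotientRel_def I).2 ?_
    have key : ⁅x, y⁆ - ⁅x', y'⁆ = ⁅x - x', y⁆ + ⁅x', y - y'⁆ := by
      rw [sub_bracket K, bracket_sub K]
      abel
    rw [key]
    exact I.add_mem (hI y (x - x') hx').2 (hI x' (y - y') hy').1)

@[simp] lemma quotBracket_mk (I : Submodule K g) (hI : IsIdeal K g I) (x y : g) :
    quotBracket I hI (Submodule.Quotient.mk x) (Submodule.Quotient.mk y) =
      Submodule.Quotient.mk ⁅x, y⁆ := rfl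

/-- The quotient Leibniz algebra `g ⧸ I` of `g` by a two-sided ideal `I`. -/
def quotLeibniz (I : Submodule K g) (hI : IsIdeal K g I) : LeibnizAlgebra K (g ⧸ I) where
  bracket := quotBracket I hI
  add_bracket X Y Z := by
    obtain ⟨x, rfl⟩ := Submodule.Quotient.mk_surjective I X
    obtain ⟨y, rfl⟩ := Submodule.Quotient.mk_surjective I Y
    obtain ⟨z, rfl⟩ := Submodule.Quotient.mk_surjective I Z
    show quotBracket I hI (Submodule.Quotient.mk x + Submodule.Quotient.mk y)
        (Submodule.Quotient.mk z) = _
    rw [← Submodule.Quotient.mk_add, quotBracket_mk]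
    show _ = quotBracket I hI (Submodule.Quotient.mk x) (Submodule.Quotient.mk z) +
      quotBracket I hI (Submodule.Quotient.mk y) (Submodule.Quotient.mk z)
    rw [quotBracket_mk, quotBracket_mk, ← Submodule.Quotient.mk_add,
      LeibnizAlgebra.add_bracket]
  bracket_add X Y Z := by
    obtain ⟨x, rfl⟩ := Submodule.Quotient.mk_surjective I X
    obtain ⟨y, rfl⟩ := Submodule.Quotient.mk_surjective I Y
    obtain ⟨z, rfl⟩ := Submodule.Quotient.mk_surjective I Z
    show quotBracket I hI (Submodule.Quotient.mk x)
        (Submodule.Quotient.mk y + Submodule.Quotient.mk z) = _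
    rw [← Submodule.Quotient.mk_add, quotBracket_mk]
    show _ = quotBracket I hI (Submodule.Quotient.mk x) (Submodule.Quotient.mk y) +
      quotBracket I hI (Submodule.Quotient.mk x) (Submodule.Quotient.mk z)
    rw [quotBracket_mk, quotBracket_mk, ← Submodule.Quotient.mk_add,
      LeibnizAlgebra.bracket_add]
  smul_bracket c X Y := by
    obtain ⟨x, rfl⟩ := Submodule.Quotient.mk_surjective I X
    obtain ⟨y, rfl⟩ := Submodule.Quotient.mk_surjective I Y
    show quotBracket I hI (c • Submodule.Quotient.mk x) (Submodule.Quotient.mk y) =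
      c • quotBracket I hI (Submodule.Quotient.mk x) (Submodule.Quotient.mk y)
    rw [← Submodule.Quotient.mk_smul, quotBracket_mk, quotBracket_mk,
      ← Submodule.Quotient.mk_smul, LeibnizAlgebra.smul_bracket]
  bracket_smul c X Y := by
    obtain ⟨x, rfl⟩ := Submodule.Quotient.mk_surjective I X
    obtain ⟨y, rfl⟩ := Submodule.Quotient.mk_surjective I Y
    show quotBracket I hI (Submodule.Quotient.mk x) (c • Submodule.Quotient.mk y) =
      c • quotBracket I hI (Submodule.Quotient.mk x) (Submodule.Quotient.mk y)
    rw [← Submodule.Quotient.mk_smul, quotBracket_mk, quotBracket_mk,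
      ← Submodule.Quotient.mk_smul, LeibnizAlgebra.bracket_smul]
  leibniz X Y Z := by
    obtain ⟨x, rfl⟩ := Submodule.Quotient.mk_surjective I X
    obtain ⟨y, rfl⟩ := Submodule.Quotient.mk_surjective I Y
    obtain ⟨z, rfl⟩ := Submodule.Quotient.mk_surjective I Z
    show quotBracket I hI (Submodule.Quotient.mk x)
        (quotBracket I hI (Submodule.Quotient.mk y) (Submodule.Quotient.mk z)) = _
    rw [quotBracket_mk, quotBracket_mk]
    show _ = quotBracket I hI
        (quotBracket I hI (Submodule.Quotient.mk x) (Submodule.Quotient.mk y))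
        (Submodule.Quotient.mk z) +
      quotBracket I hI (Submodule.Quotient.mk y)
        (quotBracket I hI (Submodule.Quotient.mk x) (Submodule.Quotient.mk z))
    rw [quotBracket_mk, quotBracket_mk, quotBracket_mk, quotBracket_mk,
      ← Submodule.Quotient.mk_add, LeibnizAlgebra.leibniz]

/-- A two-sided ideal of a Leibniz algebra, regarded as a Leibniz algebra itself. -/
def idealLeibniz (I : Submodule K g) (hI : IsIdeal K g I) : LeibnizAlgebra K I where
  bracket a b := ⟨⁅(a : g), (b : g)⁆, (hI (a : g) (b : g) b.2).1⟩
  add_bracket a b c := Subtype.ext (by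
    show ⁅((a + b : I) : g), (c : g)⁆ = ⁅(a : g), (c : g)⁆ + ⁅(b : g), (c : g)⁆
    rw [Submodule.coe_add, LeibnizAlgebra.add_bracket])
  bracket_add a b c := Subtype.ext (by
    show ⁅(a : g), ((b + c : I) : g)⁆ = ⁅(a : g), (b : g)⁆ + ⁅(a : g), (c : g)⁆
    rw [Submodule.coe_add, LeibnizAlgebra.bracket_add])
  smul_bracket c a b := Subtype.ext (by
    show ⁅((c • a : I) : g), (b : g)⁆ = c • ⁅(a : g), (b : g)⁆
    rw [Submodule.coe_smul, LeibnizAlgebra.smul_bracket])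
  bracket_smul c a b := Subtype.ext (by
    show ⁅(a : g), ((c • b : I) : g)⁆ = c • ⁅(a : g), (b : g)⁆
    rw [Submodule.coe_smul, LeibnizAlgebra.bracket_smul])
  leibniz a b c := Subtype.ext (by
    show ⁅(a : g), ⁅(b : g), (c : g)⁆⁆ =
      ⁅⁅(a : g), (b : g)⁆, (c : g)⁆ + ⁅(b : g), ⁅(a : g), (c : g)⁆⁆
    exact LeibnizAlgebra.leibniz (a : g) (b : g) (c : g))

end Quotient

section Constructions

variable {K : Type u} [Field K]

/-- The direct sum of two Leibniz algebras, with componentwise bracket. -/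
instance prodLeibniz (g₁ : Type v) (g₂ : Type v) [AddCommGroup g₁] [Module K g₁]
    [LeibnizAlgebra K g₁] [AddCommGroup g₂] [Module K g₂] [LeibnizAlgebra K g₂] :
    LeibnizAlgebra K (g₁ × g₂) where
  bracket x y := (⁅x.1, y.1⁆, ⁅x.2, y.2⁆)
  add_bracket x y z := Prod.ext_iff.2
    ⟨LeibnizAlgebra.add_bracket x.1 y.1 z.1, LeibnizAlgebra.add_bracket x.2 y.2 z.2⟩
  bracket_add x y z := Prod.ext_iff.2
    ⟨LeibnizAlgebra.bracket_add x.1 y.1 z.1, LeibnizAlgebra.bracket_add x.2 y.2 z.2⟩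
  smul_bracket c x y := Prod.ext_iff.2
    ⟨LeibnizAlgebra.smul_bracket c x.1 y.1, LeibnizAlgebra.smul_bracket c x.2 y.2⟩
  bracket_smul c x y := Prod.ext_iff.2
    ⟨LeibnizAlgebra.bracket_smul c x.1 y.1, LeibnizAlgebra.bracket_smul c x.2 y.2⟩
  leibniz x y z := Prod.ext_iff.2
    ⟨LeibnizAlgebra.leibniz x.1 y.1 z.1, LeibnizAlgebra.leibniz x.2 y.2 z.2⟩

/-- The direct sum of countably many copies of a Leibniz algebra `H`
(finitely supported sequences), with componentwise bracket. -/
noncomputable instance finsuppLeibniz (H : Type v) [AddCommGroup H] [Module K H]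
    [LeibnizAlgebra K H] : LeibnizAlgebra K (ℕ →₀ H) where
  bracket f h := Finsupp.zipWith (fun a b : H => ⁅a, b⁆) (zero_bracket K H 0) f h
  add_bracket f f' h := by
    ext i
    simp only [Finsupp.zipWith_apply, Finsupp.add_apply]
    exact LeibnizAlgebra.add_bracket (f i) (f' i) (h i)
  bracket_add f h h' := by
    ext i
    simp only [Finsupp.zipWith_apply, Finsupp.add_apply]
    exact LeibnizAlgebra.bracket_add (f i) (h i) (h' i)
  smul_bracket c f h := by
    ext i
    simp only [Finsupp.zipWith_apply, Finsupp.smul_apply]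
    exact LeibnizAlgebra.smul_bracket c (f i) (h i)
  bracket_smul c f h := by
    ext i
    simp only [Finsupp.zipWith_apply, Finsupp.smul_apply]
    exact LeibnizAlgebra.bracket_smul c (f i) (h i)
  leibniz f h k := by
    ext i
    simp only [Finsupp.zipWith_apply, Finsupp.add_apply]
    exact LeibnizAlgebra.leibniz (f i) (h i) (k i)

end Constructions

end Leibniz

open Leibniz

section Aux

open Leibniz

variable (K : Type u) (g : Type v) [Field K] [AddCommGroup g] [Module K g] [LeibnizAlgebra K g]

lemma aux_isIdeal_bk (I : Submodule K g) (hI : IsIdeal K g I) :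
    IsIdeal K g (bk K g I I) := by
  intro x a ha
  induction ha using Submodule.span_induction with
  | mem a h =>
    obtain ⟨u, hu, v, hv, rfl⟩ := h
    constructor
    · rw [LeibnizAlgebra.leibniz x u v]
      exact Submodule.add_mem _
        (Submodule.subset_span ⟨_, (hI x u hu).1, _, hv, rfl⟩)
        (Submodule.subset_span ⟨_, hu, _, (hI x v hv).1, rfl⟩)
    · have h1 : ⁅⁅u, v⁆, x⁆ = ⁅u, ⁅v, x⁆⁆ - ⁅v, ⁅u, x⁆⁆ :=
        eq_sub_of_add_eq (LeibnizAlgebra.leibniz u v x).symm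
      rw [h1]
      exact Submodule.sub_mem _
        (Submodule.subset_span ⟨_, hu, _, (hI x v hv).2, rfl⟩)
        (Submodule.subset_span ⟨_, hv, _, (hI x u hu).2, rfl⟩)
  | zero =>
    constructor
    · rw [bracket_zero K]; exact Submodule.zero_mem _
    · rw [zero_bracket K]; exact Submodule.zero_mem _
  | add a b _ _ iha ihb =>
    constructor
    · rw [LeibnizAlgebra.bracket_add]; exact Submodule.add_mem _ iha.1 ihb.1
    · rw [LeibnizAlgebra.add_bracket]; exact Submodule.add_mem _ iha.2 ihb.2
  | smul c a _ iha =>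
    constructor
    · rw [LeibnizAlgebra.bracket_smul]; exact Submodule.smul_mem _ c iha.1
    · rw [LeibnizAlgebra.smul_bracket]; exact Submodule.smul_mem _ c iha.2

lemma aux_isIdeal_derived (n : ℕ) : IsIdeal K g (derived K g n) := by
  induction n with
  | zero => intro x a _; exact ⟨Submodule.mem_top, Submodule.mem_top⟩
  | succ n ih => exact aux_isIdeal_bk K g _ ih

lemma aux_derived_succ_le (n : ℕ) : derived K g (n + 1) ≤ derived K g n := by
  refine Submodule.span_le.2 ?_
  rintro z ⟨a, ha, b, hb, rfl⟩
  exact ((aux_isIdeal_derived K g n) a b hb).1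

lemma aux_zeta_zero : zeta K g 0 = ⊥ := Ordinal.limitRecOn_zero _ _ _

lemma aux_zeta_succ (o : Ordinal.{0}) :
    zeta K g (Order.succ o) = centerStep K g (zeta K g o) :=
  Ordinal.limitRecOn_succ _ _ _ _

lemma aux_zeta_limit (o : Ordinal.{0}) (h : Order.IsSuccLimit o) :
    zeta K g o = ⨆ (a : Ordinal.{0}), ⨆ (_ : a < o), zeta K g a :=
  Ordinal.limitRecOn_limit _ _ _ _ h

lemma aux_perfect_zeta (D : Submodule K g) (hD : D = bk K g D D) (o : Ordinal.{0}) :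
    ∀ a ∈ D, ∀ z ∈ zeta K g o, ⁅a, z⁆ = 0 ∧ ⁅z, a⁆ = 0 := by
  induction o using Ordinal.limitRecOn with
  | zero =>
    intro a _ z hz
    rw [aux_zeta_zero K g, Submodule.mem_bot] at hz
    subst hz
    exact ⟨bracket_zero K g a, zero_bracket K g a⟩
  | add_one o ih =>
    intro a ha z hz
    rw [← Order.succ_eq_add_one, aux_zeta_succ K g o] at hz
    -- hz : ∀ y, ⁅z, y⁆ ∈ zeta o ∧ ⁅y, z⁆ ∈ zeta o
    have ha' : a ∈ bk K g D D := hD ▸ ha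
    induction ha' using Submodule.span_induction with
    | mem a h =>
      obtain ⟨u, hu, v, hv, rfl⟩ := h
      constructor
      · have h1 : ⁅⁅u, v⁆, z⁆ = ⁅u, ⁅v, z⁆⁆ - ⁅v, ⁅u, z⁆⁆ :=
          eq_sub_of_add_eq (LeibnizAlgebra.leibniz u v z).symm
        rw [h1, (ih u hu _ (hz v).2).1, (ih v hv _ (hz u).2).1, sub_zero]
      · rw [LeibnizAlgebra.leibniz z u v, (ih v hv _ (hz u).1).2,
          (ih u hu _ (hz v).1).1, add_zero]
    | zero =>
      exact ⟨zero_bracket K g z, bracket_zero K g z⟩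
    | add x y hx hy ihx ihy =>
      have h1 := ihx (hD ▸ hx)
      have h2 := ihy (hD ▸ hy)
      constructor
      · rw [LeibnizAlgebra.add_bracket, h1.1, h2.1, add_zero]
      · rw [LeibnizAlgebra.bracket_add, h1.2, h2.2, add_zero]
    | smul c x hx ihx =>
      have h1 := ihx (hD ▸ hx)
      constructor
      · rw [LeibnizAlgebra.smul_bracket, h1.1, smul_zero]
      · rw [LeibnizAlgebra.bracket_smul, h1.2, smul_zero]
  | limit o hlim ih =>
    intro a ha z hz
    rw [aux_zeta_limit K g o hlim] at hz
    refine Submodule.iSup_induction (motive := fun z => ⁅a, z⁆ = 0 ∧ ⁅z, a⁆ = 0)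
      (fun b => ⨆ (_ : b < o), zeta K g b) hz ?_ ?_ ?_
    · intro b x hx
      refine Submodule.iSup_induction (motive := fun x => ⁅a, x⁆ = 0 ∧ ⁅x, a⁆ = 0)
        (fun h : b < o => zeta K g b) hx ?_ ?_ ?_
      · intro hb x hx
        exact ih b hb a ha x hx
      · exact ⟨bracket_zero K g a, zero_bracket K g a⟩
      · intro x y hx hy
        constructor
        · rw [LeibnizAlgebra.bracket_add, hx.1, hy.1, add_zero]
        · rw [LeibnizAlgebra.add_bracket, hx.2, hy.2, add_zero]
    · exact ⟨bracket_zero K g a, zero_bracket K g a⟩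
    · intro x y hx hy
      constructor
      · rw [LeibnizAlgebra.bracket_add, hx.1, hy.1, add_zero]
      · rw [LeibnizAlgebra.add_bracket, hx.2, hy.2, add_zero]

end Aux

/-- A hypercentral quasi-Artinian Leibniz algebra is solvable. -/
theorem hypercentral_quasiArtinian_isSolvable (K : Type u) (g : Type v) [Field K] [AddCommGroup g] [Module K g]
    [LeibnizAlgebra K g]
    (hc : Hypercentral K g) (hqa : QuasiArtinian K g) :
    IsSolvable K g := by
  obtain ⟨m, hm⟩ := hqa (derived K g) (aux_isIdeal_derived K g) (aux_derived_succ_le K g)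
  -- D := derived (m+1) is perfect
  set D : Submodule K g := derived K g (m + 1) with hDdef
  have hle : D ≤ bk K g D D := by
    have := (hm (m + 2)).1
    exact this
  have hD : D = bk K g D D :=
    le_antisymm hle (aux_derived_succ_le K g (m + 1))
  obtain ⟨o, ho⟩ := hc
  have key := aux_perfect_zeta K g D hD o
  refine ⟨m + 2, ?_⟩
  have : derived K g (m + 2) = bk K g D D := rfl
  rw [this, ← hD]
  rw [eq_bot_iff, hD]
  refine Submodule.span_le.2 ?_
  rintro z ⟨a, ha, b, hb, rfl⟩
  have hb' : b ∈ zeta K g o := by rw [ho]; exact Submodule.mem_top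
  have := (key a ha b hb').1
  simp [this]
end

section
/- Let g be a Leibniz algebra over a field of characteristic different from two. Then g is quasi-Artinian if and only if for every non-empty collection C of two-sided ideals of g there exist I ∈ C and m ∈ ℕ such that [g^(m), I] ⊆ J and [I, g^(m)] ⊆ J for every J ∈ C with J ⊆ I. -/
universe u v

open Leibniz

section Aux

variable {K : Type u} {g : Type v} [Field K] [AddCommGroup g] [Module K g] [LeibnizAlgebra K g]

lemma bk_mono {A A' B B' : Submodule K g} (hA : A ≤ A') (hB : B ≤ B') :
    bk K g A B ≤ bk K g A' B' := by
  apply Submodule.span_mono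
  rintro z ⟨a, ha, b, hb, rfl⟩
  exact ⟨a, hA ha, b, hB hb, rfl⟩

lemma bk_le_right {A I : Submodule K g} (hI : IsIdeal K g I) : bk K g A I ≤ I := by
  apply Submodule.span_le.2
  rintro z ⟨a, _, b, hb, rfl⟩
  exact (hI a b hb).1

lemma bk_le_left {A I : Submodule K g} (hI : IsIdeal K g I) : bk K g I A ≤ I := by
  apply Submodule.span_le.2
  rintro z ⟨a, ha, b, _, rfl⟩
  exact (hI b a ha).2

lemma isIdeal_bk {A : Submodule K g} (hA : IsIdeal K g A) : IsIdeal K g (bk K g A A) := by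
  have key : bk K g A A ≤ centerStep K g (bk K g A A) := by
    apply Submodule.span_le.2
    rintro z ⟨a, ha, b, hb, rfl⟩
    intro y
    constructor
    · have h : ⁅⁅a, b⁆, y⁆ = ⁅a, ⁅b, y⁆⁆ - ⁅b, ⁅a, y⁆⁆ := by
        rw [LeibnizAlgebra.leibniz a b y]; abel
      rw [h]
      exact (bk K g A A).sub_mem
        (Submodule.subset_span ⟨a, ha, ⁅b, y⁆, (hA y b hb).2, rfl⟩)
        (Submodule.subset_span ⟨b, hb, ⁅a, y⁆, (hA y a ha).2, rfl⟩)
    · rw [LeibnizAlgebra.leibniz]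
      exact (bk K g A A).add_mem
        (Submodule.subset_span ⟨⁅y, a⁆, (hA y a ha).1, b, hb, rfl⟩)
        (Submodule.subset_span ⟨a, ha, ⁅y, b⁆, (hA y b hb).1, rfl⟩)
  intro x a ha
  exact ⟨(key ha x).2, (key ha x).1⟩

lemma derived_isIdeal : ∀ n, IsIdeal K g (derived K g n)
  | 0 => fun _ _ _ => ⟨Submodule.mem_top, Submodule.mem_top⟩
  | (n + 1) => isIdeal_bk (derived_isIdeal n)

lemma derived_antitone : Antitone (derived K g) := by
  apply antitone_nat_of_succ_le
  intro n
  exact bk_le_right (derived_isIdeal n)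

end Aux

/-- Over a field of characteristic different from two, `g` is quasi-Artinian iff every
non-empty collection `C` of ideals has a member `I` and an `m ∈ ℕ` with
`[g^(m), I] ⊆ J` and `[I, g^(m)] ⊆ J` for all `J ∈ C` with `J ⊆ I`. -/
theorem quasiArtinian_iff_collections (K : Type u) (g : Type v) [Field K] [AddCommGroup g] [Module K g]
    [LeibnizAlgebra K g]
    (hchar : ringChar K ≠ 2) :
    QuasiArtinian K g ↔
      ∀ C : Set (Submodule K g), C.Nonempty → (∀ J ∈ C, IsIdeal K g J) →
        ∃ I ∈ C, ∃ m : ℕ, ∀ J ∈ C, J ≤ I →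
          bk K g (derived K g m) I ≤ J ∧ bk K g I (derived K g m) ≤ J := by
  constructor
  · -- quasi-Artinian → collection property
    intro hQA C hne hCid
    by_contra hcon
    push_neg at hcon
    -- from the negation build a descending chain witnessing failure
    have h' : ∀ I, I ∈ C → ∀ m : ℕ, ∃ J, J ∈ C ∧ J ≤ I ∧
        ¬(bk K g (derived K g m) I ≤ J ∧ bk K g I (derived K g m) ≤ J) := by
      intro I hI m
      obtain ⟨J, hJC, hJle, hbad⟩ := hcon I hI m
      refine ⟨J, hJC, hJle, ?_⟩
      rintro ⟨h1, h2⟩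
      exact hbad h1 h2
    choose F hFC hFle hFbad using h'
    obtain ⟨I₀, hI₀⟩ := hne
    let seq : ℕ → {J : Submodule K g // J ∈ C} := fun n =>
      Nat.rec ⟨I₀, hI₀⟩ (fun n p => ⟨F p.1 p.2 n, hFC p.1 p.2 n⟩) n
    have hseq_succ : ∀ n, (seq (n + 1)).1 = F (seq n).1 (seq n).2 n := fun n => rfl
    obtain ⟨m, hm⟩ := hQA (fun n => (seq n).1)
      (fun n => hCid (seq n).1 (seq n).2)
      (fun n => hFle (seq n).1 (seq n).2 n)
    have := hFbad (seq m).1 (seq m).2 m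
    rw [← hseq_succ] at this
    exact this (hm (m + 1))
  · -- collection property → quasi-Artinian
    intro hcol I hid hdesc
    have hanti : Antitone I := antitone_nat_of_succ_le hdesc
    obtain ⟨Ik, ⟨k, rfl⟩, m, hm⟩ :=
      hcol (Set.range I) ⟨I 0, ⟨0, rfl⟩⟩ (by rintro J ⟨n, rfl⟩; exact hid n)
    refine ⟨max k m, fun n => ?_⟩
    have hIle : I (max k m) ≤ I k := hanti (le_max_left k m)
    have hdle : derived K g (max k m) ≤ derived K g m := derived_antitone (le_max_right k m)
    have hnk : I (max n k) ≤ I k := hanti (le_max_right n k)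
    obtain ⟨h1, h2⟩ := hm (I (max n k)) ⟨max n k, rfl⟩ hnk
    have hfin : I (max n k) ≤ I n := hanti (le_max_left n k)
    exact ⟨le_trans (le_trans (bk_mono hdle hIle) h1) hfin,
      le_trans (le_trans (bk_mono hIle hdle) h2) hfin⟩
end

section
/- The class of quasi-Artinian Leibniz algebras is closed under quotients: if g is a quasi-Artinian Leibniz algebra and J is a two-sided ideal of g, then the quotient Leibniz algebra g/J is quasi-Artinian. -/
universe u v

open Leibniz

section QuotAux

variable {K : Type u} {g : Type v} [Field K] [AddCommGroup g] [Module K g] [LeibnizAlgebra K g]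

lemma map_bk_aux (J : Submodule K g) (hJ : IsIdeal K g J) (A B : Submodule K g) :
    @bk K (g ⧸ J) _ _ _ (quotLeibniz J hJ) (A.map J.mkQ) (B.map J.mkQ)
      = (bk K g A B).map J.mkQ := by
  letI := quotLeibniz J hJ
  unfold bk
  rw [Submodule.map_span]
  congr 1
  ext z
  constructor
  · rintro ⟨a, ⟨a', ha', rfl⟩, b, ⟨b', hb', rfl⟩, rfl⟩
    exact ⟨⁅a', b'⁆, ⟨a', ha', b', hb', rfl⟩, rfl⟩
  · rintro ⟨w, ⟨a', ha', b', hb', rfl⟩, rfl⟩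
    exact ⟨J.mkQ a', ⟨a', ha', rfl⟩, J.mkQ b', ⟨b', hb', rfl⟩, rfl⟩

lemma map_derived_aux (J : Submodule K g) (hJ : IsIdeal K g J) (n : ℕ) :
    @derived K (g ⧸ J) _ _ _ (quotLeibniz J hJ) n = (derived K g n).map J.mkQ := by
  letI := quotLeibniz J hJ
  induction n with
  | zero =>
    show (⊤ : Submodule K (g ⧸ J)) = Submodule.map J.mkQ ⊤
    rw [Submodule.map_top, Submodule.range_mkQ]
  | succ n ih =>
    have h1 : derived K (g ⧸ J) (n + 1)
        = bk K (g ⧸ J) (derived K (g ⧸ J) n) (derived K (g ⧸ J) n) := rfl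
    rw [h1, ih, map_bk_aux]
    rfl

end QuotAux

/-- The class of quasi-Artinian Leibniz algebras is closed under quotients. -/
theorem quasiArtinian_quotient (K : Type u) (g : Type v) [Field K] [AddCommGroup g] [Module K g]
    [LeibnizAlgebra K g]
    (hg : QuasiArtinian K g) (J : Submodule K g) (hJ : IsIdeal K g J) :
    @QuasiArtinian K (g ⧸ J) _ _ _ (quotLeibniz J hJ) := by
  letI := quotLeibniz J hJ
  intro I' hI' hdesc
  -- pull back the chain
  set I : ℕ → Submodule K g := fun n => (I' n).comap J.mkQ with hIdef
  have hIideal : ∀ n, IsIdeal K g (I n) := by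
    intro n x a ha
    have h := hI' n (J.mkQ x) (J.mkQ a) ha
    exact ⟨h.1, h.2⟩
  have hIdesc : ∀ n, I (n + 1) ≤ I n := fun n => Submodule.comap_mono (hdesc n)
  obtain ⟨m, hm⟩ := hg I hIideal hIdesc
  refine ⟨m, fun n => ?_⟩
  have hmap : ∀ n, (I n).map J.mkQ = I' n := by
    intro n
    rw [hIdef]
    exact Submodule.map_comap_eq_of_surjective (Submodule.mkQ_surjective J) _
  constructor
  · have heq : bk K (g ⧸ J) (derived K (g ⧸ J) m) (I' m)
        = (bk K g (derived K g m) (I m)).map J.mkQ := by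
      rw [map_derived_aux J hJ, ← hmap m, map_bk_aux]
    rw [heq, ← hmap n]
    exact Submodule.map_mono (hm n).1
  · have heq : bk K (g ⧸ J) (I' m) (derived K (g ⧸ J) m)
        = (bk K g (I m) (derived K g m)).map J.mkQ := by
      rw [map_derived_aux J hJ, ← hmap m, map_bk_aux]
    rw [heq, ← hmap n]
    exact Submodule.map_mono (hm n).2
end

section
/- Let I be a two-sided ideal of a Leibniz algebra g. If I (regarded as a Leibniz algebra) is quasi-Artinian and the quotient g/I is solvable, then g is quasi-Artinian. -/
universe u v

open Leibniz

namespace Leibniz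

section Helpers

variable {K : Type u} {g : Type v} [Field K] [AddCommGroup g] [Module K g] [LeibnizAlgebra K g]

lemma bk_le_of_mem (A B C : Submodule K g)
    (h : ∀ a ∈ A, ∀ b ∈ B, ⁅a, b⁆ ∈ C) : bk K g A B ≤ C := by
  apply Submodule.span_le.2
  rintro z ⟨a, ha, b, hb, rfl⟩
  exact h a ha b hb

/-- The derived series of `g` maps into the derived series of `g ⧸ I`. -/
lemma derived_le_comap_quot (I : Submodule K g) (hI : IsIdeal K g I) :
    ∀ n : ℕ, derived K g n ≤
      Submodule.comap I.mkQ (@derived K (g ⧸ I) _ _ _ (quotLeibniz I hI) n) := by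
  letI := quotLeibniz I hI
  intro n
  induction n with
  | zero => exact le_top.trans (by simp [derived, subDerived])
  | succ n ih =>
    show bk K g (derived K g n) (derived K g n) ≤ _
    apply bk_le_of_mem
    intro a ha b hb
    show I.mkQ ⁅a, b⁆ ∈ bk K (g ⧸ I) (derived K (g ⧸ I) n) (derived K (g ⧸ I) n)
    have h1 : I.mkQ a ∈ derived K (g ⧸ I) n := ih ha
    have h2 : I.mkQ b ∈ derived K (g ⧸ I) n := ih hb
    exact Submodule.subset_span ⟨I.mkQ a, h1, I.mkQ b, h2, rfl⟩

/-- The derived series of `g`, shifted by `k`, lands in the image of the derived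
series of the ideal `I`, provided `derived K g k ≤ I`. -/
lemma derived_le_map_ideal (I : Submodule K g) (hI : IsIdeal K g I) (k : ℕ)
    (hk : derived K g k ≤ I) :
    ∀ j : ℕ, derived K g (k + j) ≤
      Submodule.map I.subtype (@derived K I _ _ _ (idealLeibniz I hI) j) := by
  letI := idealLeibniz I hI
  intro j
  induction j with
  | zero =>
    show derived K g k ≤ Submodule.map I.subtype (⊤ : Submodule K I)
    rwa [Submodule.map_top, Submodule.range_subtype]
  | succ j ih =>
    show bk K g (derived K g (k + j)) (derived K g (k + j)) ≤ _
    apply bk_le_of_mem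
    intro a ha b hb
    obtain ⟨a', ha', rfl⟩ := ih ha
    obtain ⟨b', hb', rfl⟩ := ih hb
    refine ⟨⁅a', b'⁆, ?_, rfl⟩
    exact Submodule.subset_span ⟨a', ha', b', hb', rfl⟩

end Helpers

end Leibniz


/-- If the ideal `I` is quasi-Artinian (as a Leibniz algebra) and `g/I` is solvable,
then `g` is quasi-Artinian. -/
theorem quasiArtinian_of_ideal_quasiArtinian_quotient_solvable (K : Type u) (g : Type v) [Field K] [AddCommGroup g] [Module K g]
    [LeibnizAlgebra K g]
    (I : Submodule K g) (hI : IsIdeal K g I)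
    (hqa : @QuasiArtinian K I _ _ _ (idealLeibniz I hI))
    (hsolv : @IsSolvable K (g ⧸ I) _ _ _ (quotLeibniz I hI)) :
    QuasiArtinian K g := by
  classical
  letI instI := idealLeibniz I hI
  -- step 1: solvability of the quotient gives `derived K g k ≤ I`
  obtain ⟨k, hk0⟩ := hsolv
  have hk : derived K g k ≤ I := by
    intro x hx
    have := derived_le_comap_quot I hI k hx
    rw [hk0] at this
    simpa [Submodule.Quotient.mk_eq_zero] using this
  -- the chain
  intro J hJid hJle
  have hmono : ∀ a b : ℕ, a ≤ b → J b ≤ J a := fun a b h =>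
    (antitone_nat_of_succ_le hJle) h
  -- restrict the chain to I
  set J' : ℕ → Submodule K I := fun n => (J n).comap I.subtype with hJ'
  have hJ'id : ∀ n, IsIdeal K I (J' n) := by
    intro n x a ha
    exact ⟨(hJid n (x : g) (a : g) ha).1, (hJid n (x : g) (a : g) ha).2⟩
  have hJ'le : ∀ n, J' (n + 1) ≤ J' n := fun n x hx => hJle n hx
  obtain ⟨m, hm⟩ := hqa J' hJ'id hJ'le
  -- two key consequences of hm, on generators
  have H1 : ∀ (n : ℕ) (u' : I), u' ∈ @derived K I _ _ _ instI m →
      ∀ w' : I, (w' : g) ∈ J m → ⁅(u' : g), (w' : g)⁆ ∈ J n := by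
    intro n u' hu' w' hw'
    exact (hm n).1 (Submodule.subset_span ⟨u', hu', w', hw', rfl⟩)
  have H2 : ∀ (n : ℕ) (w' : I), (w' : g) ∈ J m →
      ∀ u' : I, u' ∈ @derived K I _ _ _ instI m → ⁅(w' : g), (u' : g)⁆ ∈ J n := by
    intro n w' hw' u' hu'
    exact (hm n).2 (Submodule.subset_span ⟨w', hw', u', hu', rfl⟩)
  -- the exponent
  refine ⟨k + m + 1, fun n => ?_⟩
  have hD : derived K g (k + m) ≤
      Submodule.map I.subtype (@derived K I _ _ _ instI m) :=
    derived_le_map_ideal I hI k hk m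
  have hDI : derived K g (k + m) ≤ I := hD.trans (by
    rw [Submodule.map_le_iff_le_comap]; exact le_top.trans (by simp))
  have hJm : J (k + m + 1) ≤ J m := hmono m (k + m + 1) (by omega)
  constructor
  · apply bk_le_of_mem
    intro a ha b hb
    -- `ha : a ∈ derived K g (k+m+1) = bk (derived (k+m)) (derived (k+m))`
    have ha' : a ∈ bk K g (derived K g (k + m)) (derived K g (k + m)) := ha
    induction ha' using Submodule.span_induction with
    | mem x hx =>
      obtain ⟨u, hu, v, hv, rfl⟩ := hx
      have key : ⁅⁅u, v⁆, b⁆ = ⁅u, ⁅v, b⁆⁆ - ⁅v, ⁅u, b⁆⁆ :=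
        eq_sub_of_add_eq (LeibnizAlgebra.leibniz u v b).symm
      rw [key]
      apply Submodule.sub_mem
      · obtain ⟨u', hu', rfl⟩ := hD hu
        have hvbJ : ⁅v, b⁆ ∈ J m := hJm (hJid (k + m + 1) v b hb).1
        exact H1 n u' hu' ⟨⁅v, b⁆, (hI b v (hDI hv)).2⟩ hvbJ
      · obtain ⟨v', hv', rfl⟩ := hD hv
        have hubJ : ⁅u, b⁆ ∈ J m := hJm (hJid (k + m + 1) u b hb).1
        exact H1 n v' hv' ⟨⁅u, b⁆, (hI b u (hDI hu)).2⟩ hubJ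
    | zero => rw [zero_bracket K g]; exact (J n).zero_mem
    | add x y hx hy ihx ihy =>
      rw [LeibnizAlgebra.add_bracket]; exact (J n).add_mem (ihx hx) (ihy hy)
    | smul c x hx ihx =>
      rw [LeibnizAlgebra.smul_bracket]; exact (J n).smul_mem c (ihx hx)
  · apply bk_le_of_mem
    intro b hb a ha
    have ha' : a ∈ bk K g (derived K g (k + m)) (derived K g (k + m)) := ha
    induction ha' using Submodule.span_induction with
    | mem x hx =>
      obtain ⟨u, hu, v, hv, rfl⟩ := hx
      rw [LeibnizAlgebra.leibniz b u v]
      apply Submodule.add_mem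
      · obtain ⟨v', hv', rfl⟩ := hD hv
        have hbuJ : ⁅b, u⁆ ∈ J m := hJm (hJid (k + m + 1) u b hb).2
        exact H2 n ⟨⁅b, u⁆, (hI b u (hDI hu)).1⟩ hbuJ v' hv'
      · obtain ⟨u', hu', rfl⟩ := hD hu
        have hbvJ : ⁅b, v⁆ ∈ J m := hJm (hJid (k + m + 1) v b hb).2
        exact H1 n u' hu' ⟨⁅b, v⁆, (hI b v (hDI hv)).1⟩ hbvJ
    | zero => rw [bracket_zero K g]; exact (J n).zero_mem
    | add x y hx hy ihx ihy =>
      rw [LeibnizAlgebra.bracket_add]; exact (J n).add_mem (ihx hx) (ihy hy)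
    | smul c x hx ihx =>
      rw [LeibnizAlgebra.bracket_smul]; exact (J n).smul_mem c (ihx hx)
end
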